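/- arXiv:2409.07459 — 5 statements merged into one kernel-verified Lean document; each statement's English description precedes it below -/
import Mathlib

section
/- Define the generalized sLORETA reconstruction j^sLORETA_C(d,A) = (AᵀCA)^{-1/2}AᵀCd ∈ ℝ³. Then ‖j^sLORETA_C(d,A)‖² = ‖d‖_C² · GOF_C(d,A), where GOF_C is the goodness of fit in the C-norm. -/
open Matrix

/-- With `j^sLORETA_C(d,A) = (AᵀCA)^{-1/2} AᵀC d` (where `S` is the symmetric
square root of `(AᵀCA)⁻¹`), one has `‖j^sLORETA‖² = ‖d‖_C² · GOF_C(d,A)`, where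
`GOF_C(d,A) = 1 − (min_j ‖d − Aj‖_C²)/‖d‖_C²`. -/
theorem stmt4 {n : ℕ} (C : Matrix (Fin n) (Fin n) ℝ) (hC : C.PosDef)
    (A : Matrix (Fin n) (Fin 3) ℝ) (hA : A.rank = 3) (d : Fin n → ℝ) (hd : d ≠ 0)
    (S : Matrix (Fin 3) (Fin 3) ℝ) (hS : S.IsSymm) (hSsq : S * S = (Aᵀ * C * A)⁻¹)
    (jSL : Fin 3 → ℝ) (hjSL : jSL = (S * (Aᵀ * C)).mulVec d) :
    jSL ⬝ᵥ jSL =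
      (d ⬝ᵥ C.mulVec d) *
        (1 - (⨅ j : Fin 3 → ℝ, (d - A.mulVec j) ⬝ᵥ C.mulVec (d - A.mulVec j)) /
          (d ⬝ᵥ C.mulVec d)) := by
  -- C is symmetric
  have hCsymm : Cᵀ = C := by
    have := hC.isHermitian
    rwa [Matrix.IsHermitian, conjTranspose_eq_transpose_of_trivial] at this
  have hdot : ∀ x y : Fin n → ℝ, x ⬝ᵥ C.mulVec y = y ⬝ᵥ C.mulVec x := by
    intro x y
    rw [Matrix.dotProduct_mulVec, ← Matrix.mulVec_transpose, hCsymm, dotProduct_comm]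
  -- A.mulVec injective
  have hAinj : Function.Injective A.mulVecLin := by
    have h1 := LinearMap.finrank_range_add_finrank_ker A.mulVecLin
    rw [← Matrix.rank, hA] at h1
    simp only [Module.finrank_pi, Fintype.card_fin] at h1
    have hker : Module.finrank ℝ (LinearMap.ker A.mulVecLin) = 0 := by omega
    rw [← LinearMap.ker_eq_bot]
    exact Submodule.finrank_eq_zero.mp hker
  set M := Aᵀ * C * A with hMdef
  have hMpd : M.PosDef := by
    refine Matrix.PosDef.of_dotProduct_mulVec_pos ?_ ?_
    · show Mᴴ = M
      rw [conjTranspose_eq_transpose_of_trivial, hMdef, Matrix.transpose_mul,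
        Matrix.transpose_mul, Matrix.transpose_transpose, hCsymm, Matrix.mul_assoc]
    · intro x hx
      have hx' : A.mulVec x ≠ 0 := by
        intro h
        exact hx (hAinj (by simpa using h))
      have := hC.dotProduct_mulVec_pos hx'
      simpa [hMdef, star_trivial, Matrix.dotProduct_mulVec, Matrix.vecMul_vecMul,
        ← Matrix.vecMul_vecMul, Matrix.vecMul_transpose] using this
  -- basic facts about M
  have hMinv : M * M⁻¹ = 1 := Matrix.mul_nonsing_inv M (isUnit_iff_ne_zero.mpr hMpd.det_pos.ne')
  have hMsymm : Mᵀ = M := by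
    have := hMpd.isHermitian
    rwa [Matrix.IsHermitian, conjTranspose_eq_transpose_of_trivial] at this
  have hMdot : ∀ x y : Fin 3 → ℝ, x ⬝ᵥ M.mulVec y = y ⬝ᵥ M.mulVec x := by
    intro x y
    rw [Matrix.dotProduct_mulVec, ← Matrix.mulVec_transpose, hMsymm, dotProduct_comm]
  set b : Fin 3 → ℝ := (Aᵀ * C).mulVec d with hbdef
  set js : Fin 3 → ℝ := M⁻¹.mulVec b with hjsdef
  have hb : ∀ j : Fin 3 → ℝ, (A.mulVec j) ⬝ᵥ C.mulVec d = j ⬝ᵥ b := by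
    intro j
    rw [hbdef, ← Matrix.mulVec_mulVec, Matrix.dotProduct_mulVec j, Matrix.vecMul_transpose]
  have hBM : ∀ x y : Fin 3 → ℝ, (A.mulVec x) ⬝ᵥ C.mulVec (A.mulVec y) = x ⬝ᵥ M.mulVec y := by
    intro x y
    rw [hMdef, ← Matrix.mulVec_mulVec, ← Matrix.mulVec_mulVec,
      Matrix.dotProduct_mulVec x, Matrix.vecMul_transpose]
  have hMjs : M.mulVec js = b := by
    rw [hjsdef, Matrix.mulVec_mulVec, hMinv, Matrix.one_mulVec]
  -- expansion of the quadratic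
  have key : ∀ j : Fin 3 → ℝ,
      (d - A.mulVec j) ⬝ᵥ C.mulVec (d - A.mulVec j)
        = (d ⬝ᵥ C.mulVec d - js ⬝ᵥ b) + (j - js) ⬝ᵥ M.mulVec (j - js) := by
    intro j
    have e1 : (d - A.mulVec j) ⬝ᵥ C.mulVec (d - A.mulVec j)
        = d ⬝ᵥ C.mulVec d - 2 * (j ⬝ᵥ b) + j ⬝ᵥ M.mulVec j := by
      simp only [Matrix.mulVec_sub, sub_dotProduct, dotProduct_sub]
      rw [hdot d (A.mulVec j), hb j, hBM j j]; ring
    have e2 : (j - js) ⬝ᵥ M.mulVec (j - js)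
        = j ⬝ᵥ M.mulVec j - 2 * (j ⬝ᵥ b) + js ⬝ᵥ b := by
      simp only [Matrix.mulVec_sub, sub_dotProduct, dotProduct_sub]
      rw [hMjs, hMdot js j, hMjs]; ring
    rw [e1, e2]; ring
  have hlb : ∀ j : Fin 3 → ℝ,
      d ⬝ᵥ C.mulVec d - js ⬝ᵥ b ≤ (d - A.mulVec j) ⬝ᵥ C.mulVec (d - A.mulVec j) := by
    intro j
    rw [key j]
    have := hMpd.posSemidef.dotProduct_mulVec_nonneg (j - js)
    simp only [star_trivial] at this
    linarith
  have hinf : (⨅ j : Fin 3 → ℝ, (d - A.mulVec j) ⬝ᵥ C.mulVec (d - A.mulVec j))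
      = d ⬝ᵥ C.mulVec d - js ⬝ᵥ b := by
    refine le_antisymm ?_ (le_ciInf hlb)
    have hjs : (d - A.mulVec js) ⬝ᵥ C.mulVec (d - A.mulVec js)
        = d ⬝ᵥ C.mulVec d - js ⬝ᵥ b := by
      rw [key js]; simp
    calc (⨅ j : Fin 3 → ℝ, (d - A.mulVec j) ⬝ᵥ C.mulVec (d - A.mulVec j))
        ≤ (d - A.mulVec js) ⬝ᵥ C.mulVec (d - A.mulVec js) :=
          ciInf_le ⟨d ⬝ᵥ C.mulVec d - js ⬝ᵥ b, by rintro _ ⟨j, rfl⟩; exact hlb j⟩ js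
      _ = _ := hjs
  -- LHS
  have hSdot : ∀ x y : Fin 3 → ℝ, (S.mulVec x) ⬝ᵥ y = x ⬝ᵥ S.mulVec y := by
    intro x y
    rw [dotProduct_comm, Matrix.dotProduct_mulVec y, ← Matrix.mulVec_transpose,
      hS.eq, dotProduct_comm]
  have hLHS : jSL ⬝ᵥ jSL = b ⬝ᵥ js := by
    rw [hjSL, ← Matrix.mulVec_mulVec, hSdot, Matrix.mulVec_mulVec, hSsq]
  have hdCd : d ⬝ᵥ C.mulVec d ≠ 0 := by
    have := hC.dotProduct_mulVec_pos hd
    simp only [star_trivial] at this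
    exact this.ne'
  rw [hLHS, hinf, dotProduct_comm b js]
  field_simp
  ring
end

section
/- Let C, N be symmetric positive definite N×N matrices and A ∈ ℝ^{N×3} of full rank. Then AᵀCN(Id − CA(AᵀCA)⁻¹Aᵀ) = 0 if and only if C·N maps Ker(Aᵀ) into Ker(Aᵀ) (equivalently, CN·Ker(Aᵀ) = Ker(Aᵀ)). -/
open Matrix

/-- `AᵀCN(Id − CA(AᵀCA)⁻¹Aᵀ) = 0` iff `C·N` maps `Ker(Aᵀ)` into (equivalently,
onto) `Ker(Aᵀ)`. -/
theorem stmt8 {n : ℕ} (C N : Matrix (Fin n) (Fin n) ℝ) (hC : C.PosDef) (hN : N.PosDef)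
    (A : Matrix (Fin n) (Fin 3) ℝ) (hA : A.rank = 3) :
    Aᵀ * C * N * (1 - C * A * (Aᵀ * C * A)⁻¹ * Aᵀ) = 0 ↔
      (LinearMap.ker Aᵀ.mulVecLin).map (C * N).mulVecLin = LinearMap.ker Aᵀ.mulVecLin := by
  -- A has trivial kernel
  have hAinj : Function.Injective A.mulVecLin := by
    rw [← LinearMap.ker_eq_bot, ← Submodule.finrank_eq_zero]
    have h1 := A.mulVecLin.finrank_range_add_finrank_ker
    rw [show Module.finrank ℝ (LinearMap.range A.mulVecLin) = 3 from hA] at h1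
    simpa using h1
  -- AᵀCA is posdef hence invertible
  have hB : (Aᵀ * C * A).PosDef := by
    have herm : (Aᵀ * C * A).IsHermitian := by
      have := Matrix.isHermitian_conjTranspose_mul_mul A hC.isHermitian
      simpa [conjTranspose_eq_transpose_of_trivial] using this
    refine Matrix.PosDef.of_dotProduct_mulVec_pos herm fun x hx => ?_
    have hAx : A *ᵥ x ≠ 0 := by
      intro h0
      exact hx (hAinj (by simpa [Matrix.mulVecLin_apply] using h0))
    have := hC.dotProduct_mulVec_pos hAx
    simp only [star_trivial] at this ⊢
    rw [← mulVec_mulVec, ← mulVec_mulVec, dotProduct_mulVec, vecMul_transpose]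
    simpa [star_trivial] using this
  have hBdet : IsUnit (Aᵀ * C * A).det := hB.det_pos.ne'.isUnit
  have hKey : Aᵀ * (C * A * (Aᵀ * C * A)⁻¹ * Aᵀ) = Aᵀ := by
    calc Aᵀ * (C * A * (Aᵀ * C * A)⁻¹ * Aᵀ)
        = (Aᵀ * C * A) * (Aᵀ * C * A)⁻¹ * Aᵀ := by simp only [Matrix.mul_assoc]
      _ = Aᵀ := by rw [Matrix.mul_nonsing_inv _ hBdet, Matrix.one_mul]
  have hAP : Aᵀ * (1 - C * A * (Aᵀ * C * A)⁻¹ * Aᵀ) = 0 := by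
    rw [Matrix.mul_sub, Matrix.mul_one, hKey, sub_self]
  have hCN : Function.Injective (C * N).mulVecLin := by
    rw [coe_mulVecLin]
    exact mulVec_injective_iff_isUnit.mpr ((hC.isUnit).mul (hN.isUnit))
  constructor
  · intro h
    have hle : (LinearMap.ker Aᵀ.mulVecLin).map (C * N).mulVecLin ≤
        LinearMap.ker Aᵀ.mulVecLin := by
      rintro _ ⟨x, hx, rfl⟩
      have hx' : Aᵀ *ᵥ x = 0 := hx
      have hPx : (1 - C * A * (Aᵀ * C * A)⁻¹ * Aᵀ) *ᵥ x = x := by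
        rw [Matrix.sub_mulVec, Matrix.one_mulVec]
        rw [show C * A * (Aᵀ * C * A)⁻¹ * Aᵀ = C * A * (Aᵀ * C * A)⁻¹ * Aᵀ from rfl,
          show (C * A * (Aᵀ * C * A)⁻¹ * Aᵀ) *ᵥ x
            = (C * A * (Aᵀ * C * A)⁻¹) *ᵥ (Aᵀ *ᵥ x) from (mulVec_mulVec _ _ _).symm,
          hx', mulVec_zero, sub_zero]
      have h2 : (Aᵀ * C * N * (1 - C * A * (Aᵀ * C * A)⁻¹ * Aᵀ)) *ᵥ x = 0 := by
        rw [h, zero_mulVec]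
      have h3 : Aᵀ *ᵥ ((C * N) *ᵥ x) = 0 := by
        rw [mulVec_mulVec]
        calc (Aᵀ * (C * N)) *ᵥ x = (Aᵀ * C * N) *ᵥ ((1 - C * A * (Aᵀ * C * A)⁻¹ * Aᵀ) *ᵥ x) := by
              rw [hPx, Matrix.mul_assoc]
          _ = 0 := by rw [mulVec_mulVec, h2]
      exact h3
    refine Submodule.eq_of_le_of_finrank_le hle ?_
    rw [((LinearMap.ker Aᵀ.mulVecLin).equivMapOfInjective _ hCN).finrank_eq]
  · intro h
    have key : ∀ x, (Aᵀ * C * N * (1 - C * A * (Aᵀ * C * A)⁻¹ * Aᵀ)) *ᵥ x = 0 := by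
      intro x
      set P := 1 - C * A * (Aᵀ * C * A)⁻¹ * Aᵀ with hPdef
      have hPker : P *ᵥ x ∈ LinearMap.ker Aᵀ.mulVecLin := by
        simp only [LinearMap.mem_ker, mulVecLin_apply, mulVec_mulVec]
        rw [hAP, zero_mulVec]
      have hmem : (C * N) *ᵥ (P *ᵥ x) ∈ LinearMap.ker Aᵀ.mulVecLin := by
        rw [← h]
        exact ⟨P *ᵥ x, hPker, rfl⟩
      have : Aᵀ *ᵥ ((C * N) *ᵥ (P *ᵥ x)) = 0 := hmem
      calc (Aᵀ * C * N * P) *ᵥ x = Aᵀ *ᵥ ((C * N) *ᵥ (P *ᵥ x)) := by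
            rw [mulVec_mulVec, mulVec_mulVec, Matrix.mul_assoc Aᵀ C N]
        _ = 0 := this
    ext i j
    have := congrFun (key (Pi.single j 1)) i
    simpa [mulVec_single] using this
end

section
/- Let N be symmetric positive definite, x ∈ ℝ^n nonzero, R = N + xxᵀ, and ρ = (⟨N⁻¹x,x⟩² + 2⟨N⁻¹x,x⟩)/(⟨N⁻¹x,x⟩+1)². Then R⁻¹NR⁻¹ = N⁻¹ − (ρ/⟨N⁻¹x,x⟩)·(N⁻¹x)(N⁻¹x)ᵀ. -/
open Matrix

lemma aux_mul_vecMulVec {n : ℕ} (A : Matrix (Fin n) (Fin n) ℝ) (a b : Fin n → ℝ) :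
    A * vecMulVec a b = vecMulVec (A.mulVec a) b := by
  ext i j
  simp only [mul_apply, vecMulVec_apply, mulVec, dotProduct, Finset.sum_mul]
  exact Finset.sum_congr rfl fun k _ => by ring

lemma aux_vecMulVec_mul {n : ℕ} (A : Matrix (Fin n) (Fin n) ℝ) (a b : Fin n → ℝ) :
    vecMulVec a b * A = vecMulVec a (Aᵀ.mulVec b) := by
  ext i j
  simp only [mul_apply, vecMulVec_apply, mulVec, dotProduct, Finset.mul_sum, transpose_apply]
  exact Finset.sum_congr rfl fun k _ => by ring

lemma aux_vecMulVec_mulVec {n : ℕ} (a b c : Fin n → ℝ) :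
    vecMulVec a b *ᵥ c = (b ⬝ᵥ c) • a := by
  ext i
  simp only [mulVec, vecMulVec_apply, dotProduct, Pi.smul_apply, smul_eq_mul,
    Finset.mul_sum, Finset.sum_mul]
  exact Finset.sum_congr rfl fun k _ => by ring

lemma aux_smul_vecMulVec {n : ℕ} (r : ℝ) (a b : Fin n → ℝ) :
    vecMulVec (r • a) b = r • vecMulVec a b := by
  ext i j
  simp [vecMulVec_apply, mul_assoc]

lemma aux_vecMulVec_mul_vecMulVec {n : ℕ} (a b c d : Fin n → ℝ) :
    vecMulVec a b * vecMulVec c d = (b ⬝ᵥ c) • vecMulVec a d := by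
  ext i j
  simp only [mul_apply, vecMulVec_apply, Matrix.smul_apply, dotProduct, Finset.sum_mul,
    smul_eq_mul]
  exact Finset.sum_congr rfl fun k _ => by ring

/-- For `R = N + xxᵀ` and `ρ = (t² + 2t)/(t+1)²` with `t = ⟨N⁻¹x,x⟩`,
`R⁻¹NR⁻¹ = N⁻¹ − (ρ/t)·(N⁻¹x)(N⁻¹x)ᵀ`. -/
theorem stmt11 {n : ℕ} (N : Matrix (Fin n) (Fin n) ℝ) (hN : N.PosDef)
    (x : Fin n → ℝ) (hx : x ≠ 0)
    (R : Matrix (Fin n) (Fin n) ℝ) (hR : R = N + vecMulVec x x)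
    (t : ℝ) (ht : t = x ⬝ᵥ N⁻¹.mulVec x) :
    R⁻¹ * N * R⁻¹ =
      N⁻¹ - (((t ^ 2 + 2 * t) / (t + 1) ^ 2) / t) •
        vecMulVec (N⁻¹.mulVec x) (N⁻¹.mulVec x) := by
  have hNinv : N⁻¹.PosDef := hN.inv
  have hNsym : Nᵀ = N := hN.isHermitian
  have hNisym : N⁻¹ᵀ = N⁻¹ := hNinv.isHermitian
  have ht0 : 0 < t := by rw [ht]; simpa using hNinv.dotProduct_mulVec_pos hx
  have ht1 : (0:ℝ) < t + 1 := by linarith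
  set u : Fin n → ℝ := N⁻¹.mulVec x with hu
  have hNdet : IsUnit N.det := isUnit_iff_ne_zero.mpr (ne_of_gt hN.det_pos)
  have hNu : N.mulVec u = x := by
    rw [hu, mulVec_mulVec, mul_nonsing_inv _ hNdet, one_mulVec]
  have hux : x ⬝ᵥ u = t := ht.symm
  have hxu : u ⬝ᵥ x = t := by rw [dotProduct_comm]; exact hux
  set S : Matrix (Fin n) (Fin n) ℝ := N⁻¹ - (1/(t+1)) • vecMulVec u u with hS
  have hRS : R * S = 1 := by
    rw [hR, hS]
    simp only [add_mul, mul_sub, Matrix.mul_smul, mul_nonsing_inv _ hNdet,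
      aux_mul_vecMulVec, aux_vecMulVec_mul, aux_vecMulVec_mul_vecMulVec,
      hNu, hNisym, ← hu, hxu, hux, smul_smul, aux_vecMulVec_mulVec, aux_smul_vecMulVec]
    have hc : (1:ℝ) - 1/(t+1) - 1/(t+1) * t = 0 := by field_simp; ring
    have e : (1:Matrix (Fin n) (Fin n) ℝ) + vecMulVec x u -
        ((1/(t+1)) • vecMulVec x u + (1/(t+1) * t) • vecMulVec x u) =
        1 + ((1:ℝ) - 1/(t+1) - 1/(t+1) * t) • vecMulVec x u := by
      module
    rw [e, hc, zero_smul, add_zero]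
  have hSR : R⁻¹ = S := inv_eq_right_inv hRS
  rw [hSR]
  have h1 : S * N = 1 - (1/(t+1)) • vecMulVec u x := by
    rw [hS, Matrix.sub_mul, Matrix.smul_mul, nonsing_inv_mul _ hNdet,
      aux_vecMulVec_mul, hNsym, hNu]
  have h2 : vecMulVec u x * S = vecMulVec u u - (1/(t+1) * t) • vecMulVec u u := by
    rw [hS, mul_sub, Matrix.mul_smul, aux_vecMulVec_mul, hNisym, ← hu,
      aux_vecMulVec_mul_vecMulVec, hux, smul_smul]
  have hk : ((t ^ 2 + 2 * t) / (t + 1) ^ 2) / t =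
      1/(t+1) + (1/(t+1) - 1/(t+1) * (1/(t+1) * t)) := by
    field_simp
    ring
  rw [h1, Matrix.sub_mul, Matrix.one_mul, Matrix.smul_mul, h2, hS, hk]
  module
end

section
/- Let N be symmetric positive definite, x ≠ 0, R = N + xxᵀ, L ∈ ℝ^{n×k} full rank, and define P_NAI(L) = Trace((LᵀN⁻¹L)(LᵀR⁻¹L)⁻¹) and G = GOF_{N⁻¹}(x,L) = xᵀN⁻¹L(LᵀN⁻¹L)⁻¹LᵀN⁻¹x / (xᵀN⁻¹x). Then P_NAI(L) = k + μG/(1 − μG), where μ = ⟨N⁻¹x,x⟩/(1+⟨N⁻¹x,x⟩). -/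
set_option linter.unusedSectionVars false
set_option maxHeartbeats 1000000

open Matrix

section Helpers
variable {m n p : Type*} [Fintype m] [Fintype n] [Fintype p]

lemma myMul_vecMulVec (A : Matrix m n ℝ) (u : n → ℝ) (v : p → ℝ) :
    A * vecMulVec u v = vecMulVec (A *ᵥ u) v := by
  ext i j
  simp [vecMulVec_apply, mul_apply, mulVec, dotProduct, Finset.sum_mul, mul_assoc]

lemma myVecMulVec_mul (u : m → ℝ) (v : n → ℝ) (A : Matrix n p ℝ) :
    vecMulVec u v * A = vecMulVec u (v ᵥ* A) := by
  ext i j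
  simp [vecMulVec_apply, mul_apply, vecMul, dotProduct, Finset.mul_sum, mul_assoc]

lemma myTrace_vecMulVec (u v : n → ℝ) : (vecMulVec u v).trace = u ⬝ᵥ v := by
  simp [Matrix.trace, vecMulVec_apply, dotProduct, Matrix.diag]

lemma myVecMulVec_mulVec (u : m → ℝ) (v : n → ℝ) (w : n → ℝ) :
    vecMulVec u v *ᵥ w = (v ⬝ᵥ w) • u := by
  ext i
  simp [vecMulVec_apply, mulVec, dotProduct, Finset.mul_sum, mul_assoc, mul_comm, Finset.sum_mul]
  congr 1; ext j; ring

lemma myVecMulVec_mul_vecMulVec (u : m → ℝ) (v a : n → ℝ) (b : p → ℝ) :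
    vecMulVec u v * vecMulVec a b = (v ⬝ᵥ a) • vecMulVec u b := by
  ext i j
  simp [vecMulVec_apply, mul_apply, dotProduct, Finset.sum_mul, Finset.mul_sum]
  congr 1; ext l; ring

end Helpers

lemma myRank_inj {n k : ℕ} (L : Matrix (Fin n) (Fin k) ℝ) (hL : L.rank = k) :
    Function.Injective L.mulVec := by
  rw [← Matrix.coe_mulVecLin, ← LinearMap.ker_eq_bot]
  have h1 := L.mulVecLin.finrank_range_add_finrank_ker
  rw [show Module.finrank ℝ (Fin k → ℝ) = k by simp] at h1
  have h2 : Module.finrank ℝ (LinearMap.range L.mulVecLin) = k := hL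
  rw [h2] at h1
  have : Module.finrank ℝ (LinearMap.ker L.mulVecLin) = 0 := by omega
  exact Submodule.finrank_eq_zero.mp this

lemma myConjPosDef {n k : ℕ} (M : Matrix (Fin n) (Fin n) ℝ) (hM : M.PosDef)
    (L : Matrix (Fin n) (Fin k) ℝ) (hinj : Function.Injective L.mulVec) :
    (Lᵀ * M * L).PosDef := by
  refine posDef_iff_dotProduct_mulVec.mpr ⟨?_, ?_⟩
  · have hs : Mᵀ = M := hM.isHermitian
    show (Lᵀ * M * L)ᴴ = _
    rw [show (Lᵀ * M * L)ᴴ = (Lᵀ * M * L)ᵀ from rfl]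
    rw [Matrix.transpose_mul, Matrix.transpose_mul, transpose_transpose, hs, Matrix.mul_assoc]
  · intro y hy
    have hLy : L *ᵥ y ≠ 0 := fun h => hy (hinj (h.trans (L.mulVec_zero).symm))
    have := hM.dotProduct_mulVec_pos hLy
    rw [show star y = y from rfl, ← Matrix.mulVec_mulVec, ← Matrix.mulVec_mulVec,
      Matrix.mulVec_transpose]
    rw [dotProduct_comm, ← Matrix.dotProduct_mulVec, dotProduct_comm]
    rwa [show star (L *ᵥ y) = L *ᵥ y from rfl] at this

lemma myVecMulVec_posSemidef {n : ℕ} (x : Fin n → ℝ) : (vecMulVec x x).PosSemidef := by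
  refine posSemidef_iff_dotProduct_mulVec.mpr ⟨?_, ?_⟩
  · show (vecMulVec x x)ᵀ = _
    ext i j
    simp [vecMulVec_apply, mul_comm]
  · intro y
    rw [show star y = y from rfl, myVecMulVec_mulVec, dotProduct_smul, dotProduct_comm]
    exact mul_self_nonneg _

/-- For `R = N + xxᵀ` and full rank `L ∈ ℝ^{n×k}`,
`P_NAI(L) = Trace((LᵀN⁻¹L)(LᵀR⁻¹L)⁻¹) = k + μG/(1−μG)` where
`G = GOF_{N⁻¹}(x,L)` and `μ = t/(1+t)`, `t = ⟨N⁻¹x,x⟩`. -/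
theorem stmt13 {n k : ℕ} (N : Matrix (Fin n) (Fin n) ℝ) (hN : N.PosDef)
    (x : Fin n → ℝ) (hx : x ≠ 0)
    (R : Matrix (Fin n) (Fin n) ℝ) (hR : R = N + vecMulVec x x)
    (L : Matrix (Fin n) (Fin k) ℝ) (hL : L.rank = k)
    (t : ℝ) (ht : t = x ⬝ᵥ N⁻¹.mulVec x)
    (μ : ℝ) (hμ : μ = t / (1 + t))
    (G : ℝ)
    (hG : G = (x ⬝ᵥ (N⁻¹ * L * (Lᵀ * N⁻¹ * L)⁻¹ * Lᵀ * N⁻¹).mulVec x) / t) :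
    ((Lᵀ * N⁻¹ * L) * (Lᵀ * R⁻¹ * L)⁻¹).trace = k + μ * G / (1 - μ * G) := by
  have hNinv : N⁻¹.PosDef := hN.inv
  have hNis : N⁻¹ᵀ = N⁻¹ := hNinv.isHermitian
  have hNdet : IsUnit N.det := (Matrix.isUnit_iff_isUnit_det _).mp hN.isUnit
  have hNNi : N * N⁻¹ = 1 := Matrix.mul_nonsing_inv N hNdet
  set w : Fin n → ℝ := N⁻¹ *ᵥ x with hw
  have ht0 : 0 < t := by
    have := hNinv.dotProduct_mulVec_pos hx
    rwa [show star x = x from rfl, ← ht] at this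
  have h1t : (0:ℝ) < 1 + t := by linarith
  set c : ℝ := (1 + t)⁻¹ with hc
  have hc1 : c * (1 + t) = 1 := inv_mul_cancel₀ h1t.ne'
  have hxw : x ᵥ* N⁻¹ = w := by rw [← hNis, Matrix.vecMul_transpose]
  have hNw : N *ᵥ w = x := by
    rw [hw, Matrix.mulVec_mulVec, hNNi, Matrix.one_mulVec]
  have hxwt : x ⬝ᵥ w = t := ht.symm
  -- Sherman–Morrison
  have hRinv : R⁻¹ = N⁻¹ - c • vecMulVec w w := by
    apply Matrix.inv_eq_right_inv
    have hct : c * t = 1 - c := by rw [← hc1]; ring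
    rw [hR, add_mul, mul_sub, mul_sub, Matrix.mul_smul, Matrix.mul_smul, hNNi,
      myMul_vecMulVec, hNw, myVecMulVec_mul, hxw, myVecMulVec_mul_vecMulVec, hxwt,
      smul_smul, hct, sub_smul, one_smul]
    abel
  set A : Matrix (Fin k) (Fin k) ℝ := Lᵀ * N⁻¹ * L with hA
  have hinj : Function.Injective L.mulVec := myRank_inj L hL
  have hApd : A.PosDef := myConjPosDef N⁻¹ hNinv L hinj
  have hAdet : IsUnit A.det := (Matrix.isUnit_iff_isUnit_det _).mp hApd.isUnit
  have hAAi : A * A⁻¹ = 1 := Matrix.mul_nonsing_inv A hAdet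
  have hAis : A⁻¹ᵀ = A⁻¹ := hApd.inv.isHermitian
  set v : Fin k → ℝ := Lᵀ *ᵥ w with hv
  have hwL : w ᵥ* L = v := by rw [hv, Matrix.mulVec_transpose]
  set u : Fin k → ℝ := A⁻¹ *ᵥ v with hu
  set s : ℝ := v ⬝ᵥ u with hs
  have hvAi : v ᵥ* A⁻¹ = u := by rw [← hAis, Matrix.vecMul_transpose, hu]
  have hAu : A *ᵥ u = v := by rw [hu, Matrix.mulVec_mulVec, hAAi, Matrix.one_mulVec]
  -- B = Lᵀ R⁻¹ L
  have hB : Lᵀ * R⁻¹ * L = A - c • vecMulVec v v := by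
    rw [hRinv, Matrix.mul_sub, Matrix.sub_mul, Matrix.mul_smul, Matrix.smul_mul,
      myMul_vecMulVec, myVecMulVec_mul, hwL, hA]
  have hRpd : R.PosDef := hR ▸ hN.add_posSemidef (myVecMulVec_posSemidef x)
  have hBpd : (A - c • vecMulVec v v).PosDef := hB ▸ myConjPosDef R⁻¹ hRpd.inv L hinj
  -- 1 - c s ≠ 0
  have hcs : 1 - c * s ≠ 0 := by
    intro h0
    have hu0 : u ≠ 0 := by
      intro h
      rw [hs, h, dotProduct_zero, mul_zero, sub_zero] at h0
      exact one_ne_zero h0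
    have hBu : (A - c • vecMulVec v v) *ᵥ u = 0 := by
      rw [Matrix.sub_mulVec, Matrix.smul_mulVec, myVecMulVec_mulVec, hAu, ← hs,
        smul_smul]
      rw [show c * s = 1 from by linarith [h0]]
      simp
    have := hBpd.dotProduct_mulVec_pos hu0
    rw [hBu, dotProduct_zero] at this
    exact lt_irrefl 0 this
  set d : ℝ := c / (1 - c * s) with hd
  have hdc : c * (d * s) = d - c := by
    rw [hd]; field_simp; ring
  have hBC : (A - c • vecMulVec v v) * (A⁻¹ + d • vecMulVec u u) = 1 := by
    rw [Matrix.mul_add, Matrix.sub_mul, Matrix.sub_mul, Matrix.mul_smul, hAAi,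
      myMul_vecMulVec, hAu, Matrix.smul_mul, myVecMulVec_mul, hvAi,
      Matrix.smul_mul, Matrix.mul_smul, myVecMulVec_mul_vecMulVec, ← hs,
      smul_smul, smul_smul, show (c * d * s : ℝ) = d - c from by rw [mul_assoc]; exact hdc, sub_smul]
    abel
  have hBinv : (Lᵀ * R⁻¹ * L)⁻¹ = A⁻¹ + d • vecMulVec u u := by
    rw [hB]; exact Matrix.inv_eq_right_inv hBC
  -- trace
  have htr : (A * (Lᵀ * R⁻¹ * L)⁻¹).trace = k + d * s := by
    rw [hBinv, Matrix.mul_add, Matrix.mul_smul, hAAi, myMul_vecMulVec, hAu,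
      Matrix.trace_add, Matrix.trace_one, Matrix.trace_smul, myTrace_vecMulVec, ← hs]
    simp [smul_eq_mul]
  -- G = s / t
  have hGs : G = s / t := by
    rw [hG]
    congr 1
    rw [← Matrix.mulVec_mulVec, ← Matrix.mulVec_mulVec, ← Matrix.mulVec_mulVec,
      ← Matrix.mulVec_mulVec, ← hv, ← hu,
      Matrix.dotProduct_mulVec, hxw, Matrix.dotProduct_mulVec, hwL, ← hs]
  have hts : t * G = s := by rw [hGs]; field_simp
  have hμG : μ * G = c * s := by
    rw [hμ, hc, div_eq_inv_mul, mul_assoc, hts]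
  rw [htr, hμG, hd]
  congr 1
  field_simp
end

section
/- In the setting R = N + xxᵀ, define P_SAM(L) = Trace((LᵀR⁻¹L)(LᵀR⁻¹NR⁻¹L)⁻¹) and G = GOF_{N⁻¹}(x,L). Then P_SAM(L) = k + (1/(⟨N⁻¹x,x⟩+2))·(1/(1 − ρG) − 1), where ρ = (⟨N⁻¹x,x⟩²+2⟨N⁻¹x,x⟩)/(⟨N⁻¹x,x⟩+1)². -/
open Matrix

section helpers
set_option linter.unusedSectionVars false
variable {l m n : Type*} [Fintype l] [Fintype m] [Fintype n]

lemma mul_vecMulVec' (M : Matrix l m ℝ) (a : m → ℝ) (b : n → ℝ) :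
    M * vecMulVec a b = vecMulVec (M *ᵥ a) b := by
  ext i j
  simp only [mul_apply, vecMulVec_apply, mulVec, dotProduct, Finset.sum_mul]
  exact Finset.sum_congr rfl fun _ _ => by ring

lemma vecMulVec_mul' (a : l → ℝ) (b : m → ℝ) (M : Matrix m n ℝ) :
    vecMulVec a b * M = vecMulVec a (b ᵥ* M) := by
  ext i j
  simp only [mul_apply, vecMulVec_apply, vecMul, dotProduct, Finset.mul_sum]
  exact Finset.sum_congr rfl fun _ _ => by ring

lemma vecMulVec_mulVec' (a : l → ℝ) (b c : m → ℝ) :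
    vecMulVec a b *ᵥ c = (b ⬝ᵥ c) • a := by
  ext i
  simp only [mulVec, vecMulVec_apply, dotProduct, Pi.smul_apply, smul_eq_mul, Finset.sum_mul,
    Finset.mul_sum]
  exact Finset.sum_congr rfl fun _ _ => by ring

lemma vecMul_vecMulVec' (b c : m → ℝ) (d : n → ℝ) :
    b ᵥ* vecMulVec c d = (b ⬝ᵥ c) • d := by
  ext j
  simp only [vecMul, vecMulVec_apply, dotProduct, Pi.smul_apply, smul_eq_mul, Finset.sum_mul,
    Finset.mul_sum]
  exact Finset.sum_congr rfl fun _ _ => by ring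

lemma vecMulVec_smul_left (r : ℝ) (a : l → ℝ) (b : n → ℝ) :
    vecMulVec (r • a) b = r • vecMulVec a b := by
  ext i j; simp [vecMulVec_apply, mul_assoc]

lemma vecMulVec_smul_right (r : ℝ) (a : l → ℝ) (b : n → ℝ) :
    vecMulVec a (r • b) = r • vecMulVec a b := by
  ext i j; simp [vecMulVec_apply]; ring

lemma trace_vecMulVec (a b : n → ℝ) : (vecMulVec a b).trace = a ⬝ᵥ b := by
  simp [Matrix.trace, Matrix.diag, vecMulVec_apply, dotProduct]

lemma posSemidef_vecMulVec (x : n → ℝ) : (vecMulVec x x).PosSemidef := by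
  rw [vecMulVec_eq Unit]
  have h : replicateRow Unit x = (replicateCol Unit x)ᴴ := by ext i j; simp
  rw [h]
  exact posSemidef_self_mul_conjTranspose _

lemma posDef_conj {k : Type*} [Fintype k] [DecidableEq k]
    {M : Matrix m m ℝ} (hM : M.PosDef) (P : Matrix m k ℝ)
    (hP : Function.Injective P.mulVecLin) : (Pᵀ * M * P).PosDef := by
  have hPt : Pᴴ = Pᵀ := by ext i j; simp
  refine Matrix.PosDef.of_dotProduct_mulVec_pos ?_ ?_
  · have := isHermitian_conjTranspose_mul_mul P hM.1
    rwa [hPt] at this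
  · intro y hy
    have hPy : P *ᵥ y ≠ 0 := fun h => hy (hP (by simpa [mulVecLin_apply] using h))
    have h2 := hM.dotProduct_mulVec_pos hPy
    simpa [star_trivial, ← mulVec_mulVec, dotProduct_mulVec, vecMul_transpose] using h2

end helpers

/-- For `R = N + xxᵀ` and full rank `L ∈ ℝ^{n×k}`,
`P_SAM(L) = Trace((LᵀR⁻¹L)(LᵀR⁻¹NR⁻¹L)⁻¹) = k + (1/(t+2))·(1/(1−ρG) − 1)` where
`G = GOF_{N⁻¹}(x,L)`, `ρ = (t²+2t)/(t+1)²`, `t = ⟨N⁻¹x,x⟩`. -/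
theorem stmt14 {n k : ℕ} (N : Matrix (Fin n) (Fin n) ℝ) (hN : N.PosDef)
    (x : Fin n → ℝ) (hx : x ≠ 0)
    (R : Matrix (Fin n) (Fin n) ℝ) (hR : R = N + vecMulVec x x)
    (L : Matrix (Fin n) (Fin k) ℝ) (hL : L.rank = k)
    (t : ℝ) (ht : t = x ⬝ᵥ N⁻¹.mulVec x)
    (ρ : ℝ) (hρ : ρ = (t ^ 2 + 2 * t) / (t + 1) ^ 2)
    (G : ℝ)
    (hG : G = (x ⬝ᵥ (N⁻¹ * L * (Lᵀ * N⁻¹ * L)⁻¹ * Lᵀ * N⁻¹).mulVec x) / t) :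
    ((Lᵀ * R⁻¹ * L) * (Lᵀ * R⁻¹ * N * R⁻¹ * L)⁻¹).trace =
      k + (1 / (t + 2)) * (1 / (1 - ρ * G) - 1) := by
  classical
  -- N basics
  have hNdet : IsUnit N.det := (Matrix.isUnit_iff_isUnit_det N).mp hN.isUnit
  have hNT : Nᵀ = N := by ext i j; rw [← hN.1.apply i j]; simp
  have hNinv : N⁻¹.PosDef := hN.inv
  set u : Fin n → ℝ := N⁻¹ *ᵥ x with hu
  have hNu : N *ᵥ u = x := by
    rw [hu, mulVec_mulVec, Matrix.mul_nonsing_inv _ hNdet, one_mulVec]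
  have hxNinv : x ᵥ* N⁻¹ = u := by
    rw [hu, ← vecMul_transpose, transpose_nonsing_inv, hNT]
  have huN : u ᵥ* N = x := by rw [← hNT, vecMul_transpose, hNu]
  have ht0 : 0 < t := by
    rw [ht]; have := hNinv.dotProduct_mulVec_pos hx; simpa using this
  have h1t : (1 : ℝ) + t ≠ 0 := by linarith
  have ht2 : t + 2 ≠ 0 := by linarith
  have htne : t ≠ 0 := ne_of_gt ht0
  -- L injective
  have hLinj : Function.Injective L.mulVecLin := by
    rw [← LinearMap.ker_eq_bot]
    have h1 : Module.finrank ℝ (LinearMap.range L.mulVecLin) = k := hL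
    have h2 := LinearMap.finrank_range_add_finrank_ker L.mulVecLin
    rw [h1, Module.finrank_fin_fun] at h2
    exact Submodule.finrank_eq_zero.mp (by omega)
  -- A := Lᵀ N⁻¹ L
  set A : Matrix (Fin k) (Fin k) ℝ := Lᵀ * N⁻¹ * L with hA
  have hApos : A.PosDef := posDef_conj hNinv L hLinj
  have hAdet : IsUnit A.det := (Matrix.isUnit_iff_isUnit_det A).mp hApos.isUnit
  set v : Fin k → ℝ := Lᵀ *ᵥ u with hv
  have huL : u ᵥ* L = v := by rw [hv, mulVec_transpose]
  set s : ℝ := (v ᵥ* A⁻¹) ⬝ᵥ v with hs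
  -- R basics
  have hRpos : R.PosDef := by rw [hR]; exact hN.add_posSemidef (posSemidef_vecMulVec x)
  have hRdet : IsUnit R.det := (Matrix.isUnit_iff_isUnit_det R).mp hRpos.isUnit
  have hRT : Rᵀ = R := by ext i j; rw [← hRpos.1.apply i j]; simp
  -- Sherman–Morrison
  have hRinv : R⁻¹ = N⁻¹ - (1 + t)⁻¹ • vecMulVec u u := by
    apply inv_eq_right_inv
    rw [hR, Matrix.add_mul, Matrix.mul_sub, Matrix.mul_sub, Matrix.mul_smul, Matrix.mul_smul,
        Matrix.mul_nonsing_inv _ hNdet]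
    simp only [mul_vecMulVec', vecMulVec_mul', vecMulVec_mulVec', vecMulVec_smul_left,
      hNu, hxNinv]
    rw [show x ⬝ᵥ u = t from ht.symm]
    match_scalars <;> (try field_simp) <;> ring
  -- Lᵀ R⁻¹ L
  have hLRL : Lᵀ * R⁻¹ * L = A - (1 + t)⁻¹ • vecMulVec v v := by
    rw [hRinv, Matrix.mul_sub, Matrix.sub_mul, Matrix.mul_smul, Matrix.smul_mul,
        mul_vecMulVec', vecMulVec_mul', huL, ← hv, ← hA]
  -- R⁻¹ N R⁻¹
  set c : ℝ := (t + 2) / (1 + t) ^ 2 with hc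
  have hRNR : R⁻¹ * N * R⁻¹ = N⁻¹ - c • vecMulVec u u := by
    rw [hRinv]
    simp only [Matrix.sub_mul, Matrix.mul_sub, Matrix.smul_mul, Matrix.mul_smul,
      Matrix.nonsing_inv_mul _ hNdet, Matrix.one_mul, mul_vecMulVec', vecMulVec_mul',
      vecMulVec_mulVec', vecMulVec_smul_left, vecMulVec_smul_right, huN, hxNinv, hNu]
    rw [show x ⬝ᵥ u = t from ht.symm, hc]
    match_scalars <;> (try field_simp) <;> ring
  have hassoc : Lᵀ * R⁻¹ * N * R⁻¹ * L = Lᵀ * (R⁻¹ * N * R⁻¹) * L := by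
    simp only [Matrix.mul_assoc]
  have hBeq : Lᵀ * R⁻¹ * N * R⁻¹ * L = A - c • vecMulVec v v := by
    rw [hassoc, hRNR, Matrix.mul_sub, Matrix.sub_mul, Matrix.mul_smul, Matrix.smul_mul,
        mul_vecMulVec', vecMulVec_mul', huL, ← hv, ← hA]
  -- positivity of B
  have hRinvInj : Function.Injective R⁻¹.mulVecLin := by
    have h := Matrix.mulVec_injective_iff_isUnit.mpr hRpos.inv.isUnit
    exact fun a b hab => h (by simpa [mulVecLin_apply] using hab)
  have hBpos : (Lᵀ * R⁻¹ * N * R⁻¹ * L).PosDef := by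
    have h1 := posDef_conj hN R⁻¹ hRinvInj
    rw [transpose_nonsing_inv, hRT] at h1
    have h2 := posDef_conj h1 L hLinj
    rwa [← hassoc] at h2
  -- determinant identity and nonvanishing of 1 - c*s
  have hsv : v ⬝ᵥ A⁻¹ *ᵥ v = s := by rw [dotProduct_mulVec, hs]
  have hdetB : (A - c • vecMulVec v v).det = A.det * (1 - c * s) := by
    have hfac : A - c • vecMulVec v v
        = A * (1 + replicateCol Unit (-(c • (A⁻¹ *ᵥ v))) * replicateRow Unit v) := by
      rw [← vecMulVec_eq, Matrix.mul_add, Matrix.mul_one, mul_vecMulVec', mulVec_neg,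
          mulVec_smul, mulVec_mulVec, Matrix.mul_nonsing_inv _ hAdet, one_mulVec]
      rw [show vecMulVec (-(c • v)) v = -(c • vecMulVec v v) by
        ext i j; simp [vecMulVec_apply]; ring]
      rw [sub_eq_add_neg]
    rw [hfac, det_mul, det_one_add_replicateCol_mul_replicateRow]
    rw [dotProduct_neg, dotProduct_smul, hsv, smul_eq_mul]
    ring
  have h1cs : 1 - c * s ≠ 0 := by
    have hBd : (0:ℝ) < (A - c • vecMulVec v v).det := by
      rw [← hBeq]; exact hBpos.det_pos
    intro h
    rw [hdetB, h, mul_zero] at hBd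
    exact lt_irrefl _ hBd
  -- inverse of B
  set d : ℝ := c / (1 - c * s) with hd
  have hBinv : (Lᵀ * R⁻¹ * N * R⁻¹ * L)⁻¹ = A⁻¹ + d • (A⁻¹ * vecMulVec v v * A⁻¹) := by
    rw [hBeq]
    apply inv_eq_right_inv
    simp only [Matrix.mul_add, Matrix.add_mul, Matrix.mul_sub, Matrix.sub_mul,
      Matrix.smul_mul, Matrix.mul_smul, ← Matrix.mul_assoc, mul_vecMulVec', vecMulVec_mul',
      vecMulVec_mulVec', vecMulVec_smul_left, vecMulVec_smul_right, mulVec_mulVec,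
      Matrix.mul_nonsing_inv _ hAdet, Matrix.one_mul, Matrix.mul_one, one_mulVec,
      dotProduct_mulVec]
    rw [← hs, hd]
    match_scalars <;> (try field_simp [h1cs]) <;> try ring
  -- the product
  have hprod : (A - (1 + t)⁻¹ • vecMulVec v v) * (A⁻¹ + d • (A⁻¹ * vecMulVec v v * A⁻¹))
      = 1 + (d - (1 + t)⁻¹ - (1 + t)⁻¹ * d * s) • vecMulVec v (v ᵥ* A⁻¹) := by
    simp only [Matrix.mul_add, Matrix.add_mul, Matrix.mul_sub, Matrix.sub_mul,
      Matrix.smul_mul, Matrix.mul_smul, ← Matrix.mul_assoc, mul_vecMulVec', vecMulVec_mul',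
      vecMulVec_mulVec', vecMulVec_smul_left, vecMulVec_smul_right, mulVec_mulVec,
      Matrix.mul_nonsing_inv _ hAdet, Matrix.one_mul, Matrix.mul_one, one_mulVec,
      dotProduct_mulVec]
    rw [← hs]
    match_scalars <;> (try field_simp [h1cs]) <;> try ring
  -- identify s with the numerator of G
  have hnum : x ⬝ᵥ (N⁻¹ * L * A⁻¹ * Lᵀ * N⁻¹) *ᵥ x = s := by
    simp only [← Matrix.mulVec_mulVec]
    rw [← hu, ← hv]
    rw [dotProduct_mulVec, hxNinv, dotProduct_mulVec, huL, dotProduct_mulVec, ← hs]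
  have hGs : G = s / t := by rw [hG, hnum]
  have hrw : 1 - ρ * G = 1 - c * s := by
    rw [hρ, hGs, hc]
    field_simp
    ring
  have hdot : v ⬝ᵥ (v ᵥ* A⁻¹) = s := (dotProduct_comm _ _).trans hs.symm
  rw [hLRL, hBinv, hprod, trace_add, trace_smul, trace_one, _root_.trace_vecMulVec, hdot,
    smul_eq_mul, hrw, Fintype.card_fin]
  congr 1
  have hkey0 : (1 + t) ^ 2 - (t + 2) * s ≠ 0 := by
    intro h
    apply h1cs
    rw [hc]
    field_simp
    linarith [h]
  rw [hd, hc]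
  rw [show (1:ℝ) - (t + 2) / (1 + t) ^ 2 * s = ((1 + t) ^ 2 - (t + 2) * s) / (1 + t) ^ 2 by
    field_simp]
  field_simp
  ring
end
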